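/- If (X,T) is mean equicontinuous, then for every f ∈ C(X) the sequence of Birkhoff averages f_n(x) = (1/n)∑_{i=0}^{n-1} f(T^i x) is uniformly equicontinuous, i.e., for every ε>0 there is δ>0 such that d(x,y)<δ implies |f_n(x)−f_n(y)|<ε for all n ∈ ℕ. -/

import Mathlib

open Filter Topology MeasureTheory
open scoped Classical

noncomputable def avgDist {Z : Type*} [MetricSpace Z] (R : Z → Z) (x y : Z) (n : ℕ) : ℝ :=
  (n : ℝ)⁻¹ * ∑ i ∈ Finset.range n, dist (R^[i] x) (R^[i] y)

def MeanEquicontinuous {Z : Type*} [MetricSpace Z] (R : Z → Z) : Prop :=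
  ∀ ε > 0, ∃ δ > 0, ∀ x y : Z, dist x y < δ →
    Filter.limsup (avgDist R x y) Filter.atTop < ε

def MeanEqPtAt {Z : Type*} [MetricSpace Z] (R : Z → Z) (x : Z) : Prop :=
  ∀ ε > 0, ∃ δ > 0, ∀ y : Z, dist x y < δ →
    Filter.limsup (avgDist R x y) Filter.atTop < ε

def MeanSensitive {Z : Type*} [MetricSpace Z] (R : Z → Z) : Prop :=
  ∃ δ > 0, ∀ x : Z, ∀ ε > 0, ∃ y : Z, dist x y < ε ∧
    δ < Filter.limsup (avgDist R x y) Filter.atTop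

/-!
Let `D̄(x, y) = limsup (1/n) ∑_{i<n} d(Tⁱx, Tⁱy)` be the Besicovitch pseudometric. It satisfies the
triangle inequality and does not increase under `T × T`, so for `β > 0` the closure `W` of
`{D̄ ≤ β}` is a compact `T × T`-invariant set on which, by mean equicontinuity, `D̄ < 3β`.
Compactness gives one `N` such that every pair in `W` has its average distance below `3β` at some
time in `(0, N]`; cutting an orbit into such blocks bounds the `n`-th average on `W` by
`3β + O(N/n)`. Uniform continuity of the finitely many maps `Tⁱ`, `i < n₀`, handles the first
`n₀` averages, so the averaged distances are uniformly small near the diagonal; since a continuous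
`f` satisfies `|f a - f b| ≤ η + K d(a, b)`, its Birkhoff averages inherit this.
-/

open Set

theorem dist_le_diam_univ {X : Type*} [MetricSpace X] [BoundedSpace X] (x y : X) :
    dist x y ≤ Metric.diam (univ : Set X) :=
  Metric.dist_le_diam_of_mem BoundedSpace.bounded_univ trivial trivial

theorem birkhoffSum_le_mul_add_of_mapsTo {Y : Type*} {φ : Y → Y} {g : Y → ℝ} {S : Set Y}
    {c C : ℝ} {N : ℕ} (hS : MapsTo φ S S) (hc : 0 ≤ c) (hC : 0 ≤ C) (hgC : ∀ y, g y ≤ C)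
    (hstop : ∀ p ∈ S, ∃ k, 0 < k ∧ k ≤ N ∧ birkhoffSum φ g k p ≤ k * c) :
    ∀ n, ∀ p ∈ S, birkhoffSum φ g n p ≤ n * c + N * C := by
  have hsum_le (n : ℕ) (p : Y) : birkhoffSum φ g n p ≤ n * C := by
    simpa [birkhoffSum] using
      Finset.sum_le_card_nsmul (Finset.range n) _ C fun i _ => hgC (φ^[i] p)
  intro n
  induction n using Nat.strong_induction_on with
  | _ n ih =>
    intro p hp
    obtain ⟨k, hk, hkN, hkc⟩ := hstop p hp
    rcases lt_or_ge n k with hnk | hkn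
    · calc birkhoffSum φ g n p ≤ n * C := hsum_le n p
        _ ≤ N * C := by gcongr; omega
        _ ≤ n * c + N * C := le_add_of_nonneg_left (by positivity)
    · obtain ⟨m, rfl⟩ := Nat.exists_eq_add_of_le hkn
      have hm := ih m (by omega) _ (hS.iterate k hp)
      rw [birkhoffSum_add]
      push_cast
      linarith

theorem IsCompact.exists_forall_exists_le_lt {Y : Type*} [TopologicalSpace Y] {K : Set Y}
    (hK : IsCompact K) {u : ℕ → Y → ℝ} (hu : ∀ k, Continuous (u k)) {c : ℝ}
    (h : ∀ p ∈ K, ∃ k, 0 < k ∧ u k p < c) :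
    ∃ N, ∀ p ∈ K, ∃ k, 0 < k ∧ k ≤ N ∧ u k p < c := by
  refine hK.elim_directed_cover (fun N => {p | ∃ k, 0 < k ∧ k ≤ N ∧ u k p < c}) (fun N => ?_)
    (fun p hp => ?_) (Monotone.directed_le fun N M hNM p ⟨k, hk, hkN, hkp⟩ => ?_)
  · simp only [ofPred_exists, ofPred_and]
    exact isOpen_iUnion fun k =>
      isOpen_const.inter (isOpen_const.inter (isOpen_lt (hu k) continuous_const))
  · obtain ⟨k, hk, hkp⟩ := h p hp
    exact mem_iUnion.2 ⟨k, k, hk, le_rfl, hkp⟩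
  · exact ⟨k, hk, hkN.trans hNM, hkp⟩

section avgDist

variable {X : Type*} [MetricSpace X] (T : X → X)

theorem avgDist_eq_birkhoffAverage (x y : X) (n : ℕ) :
    avgDist T x y n = birkhoffAverage ℝ (Prod.map T T) (fun p => dist p.1 p.2) n (x, y) := by
  simp [avgDist, birkhoffAverage, birkhoffSum]

theorem birkhoffSum_eq_mul_avgDist (x y : X) (n : ℕ) :
    birkhoffSum (Prod.map T T) (fun p => dist p.1 p.2) n (x, y) = n * avgDist T x y n := by
  rcases eq_or_ne n 0 with rfl | hn
  · simp
  · rw [avgDist_eq_birkhoffAverage, birkhoffAverage, smul_eq_mul, mul_inv_cancel_left₀ (by simpa)]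

theorem avgDist_nonneg (x y : X) (n : ℕ) : 0 ≤ avgDist T x y n := by
  unfold avgDist; positivity

theorem avgDist_le_of_forall_dist_le {x y : X} {n : ℕ} {c : ℝ} (hc : 0 ≤ c)
    (h : ∀ i < n, dist (T^[i] x) (T^[i] y) ≤ c) : avgDist T x y n ≤ c :=
  calc avgDist T x y n ≤ (n : ℝ)⁻¹ * (n * c) := by
        unfold avgDist
        gcongr
        simpa using Finset.sum_le_card_nsmul (Finset.range n) _ c fun i hi =>
          h i (Finset.mem_range.1 hi)
    _ ≤ c := by rw [← mul_assoc]; exact mul_le_of_le_one_left hc inv_mul_le_one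

theorem avgDist_triangle (x y z : X) (n : ℕ) :
    avgDist T x z n ≤ avgDist T x y n + avgDist T y z n := by
  unfold avgDist
  rw [← mul_add, ← Finset.sum_add_distrib]
  gcongr
  exact dist_triangle _ _ _

theorem continuous_avgDist (hT : Continuous T) (n : ℕ) :
    Continuous fun p : X × X => avgDist T p.1 p.2 n := by
  unfold avgDist
  have := hT.iterate
  fun_prop

theorem isBoundedUnder_ge_avgDist (x y : X) : IsBoundedUnder (· ≥ ·) atTop (avgDist T x y) :=
  isBoundedUnder_of ⟨0, avgDist_nonneg T x y⟩

variable [BoundedSpace X]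

theorem avgDist_le_diam (x y : X) (n : ℕ) : avgDist T x y n ≤ Metric.diam (univ : Set X) :=
  avgDist_le_of_forall_dist_le T Metric.diam_nonneg fun _ _ => dist_le_diam_univ _ _

theorem isBoundedUnder_le_avgDist (x y : X) : IsBoundedUnder (· ≤ ·) atTop (avgDist T x y) :=
  isBoundedUnder_of ⟨_, avgDist_le_diam T x y⟩

end avgDist

-- `MeanEquicontinuous T` unfolds to: `besicovitchDist T x y < ε` whenever `dist x y < δ ε`.
noncomputable def besicovitchDist {X : Type*} [MetricSpace X] (T : X → X) (x y : X) : ℝ :=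
  limsup (avgDist T x y) atTop

section besicovitchDist

variable {X : Type*} [MetricSpace X] [BoundedSpace X] (T : X → X)

theorem besicovitchDist_triangle (x y z : X) :
    besicovitchDist T x z ≤ besicovitchDist T x y + besicovitchDist T y z :=
  (limsup_le_limsup (Eventually.of_forall (avgDist_triangle T x y z))
    (isBoundedUnder_ge_avgDist T x z).isCoboundedUnder_le
    (isBoundedUnder_le_add (isBoundedUnder_le_avgDist T x y)
      (isBoundedUnder_le_avgDist T y z))).trans
    (limsup_add_le (isBoundedUnder_ge_avgDist T x y) (isBoundedUnder_le_avgDist T x y)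
      (isBoundedUnder_ge_avgDist T y z).isCoboundedUnder_le (isBoundedUnder_le_avgDist T y z))

theorem besicovitchDist_map_le (x y : X) :
    besicovitchDist T (T x) (T y) ≤ besicovitchDist T x y := by
  set w : ℕ → ℝ := avgDist T (T x) (T y) - avgDist T x y
  have hdist_bdd : Bornology.IsBounded (range fun p : X × X => dist p.1 p.2) :=
    (Metric.isBounded_Icc 0 (Metric.diam (univ : Set X))).subset <| range_subset_iff.2 fun p =>
      ⟨dist_nonneg, dist_le_diam_univ p.1 p.2⟩
  have hw : Tendsto w atTop (𝓝 0) := by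
    simpa only [w, Pi.sub_def, avgDist_eq_birkhoffAverage, Prod.map_apply] using
      tendsto_birkhoffAverage_apply_sub_birkhoffAverage' ℝ hdist_bdd (Prod.map T T) (x, y)
  calc besicovitchDist T (T x) (T y) = limsup (avgDist T x y + w) atTop := by
        simp only [besicovitchDist, w, add_sub_cancel]
    _ ≤ besicovitchDist T x y + limsup w atTop :=
        limsup_add_le (isBoundedUnder_ge_avgDist T x y) (isBoundedUnder_le_avgDist T x y)
          hw.isBoundedUnder_ge.isCoboundedUnder_le hw.isBoundedUnder_le
    _ = besicovitchDist T x y := by rw [hw.limsup_eq, add_zero]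

theorem eventually_avgDist_lt {x y : X} {c : ℝ} (h : besicovitchDist T x y < c) :
    ∀ᶠ n in atTop, avgDist T x y n < c :=
  eventually_lt_of_limsup_lt h (isBoundedUnder_le_avgDist T x y)

end besicovitchDist

section MeanEquicontinuous

variable {X : Type*} [MetricSpace X] {T : X → X}

theorem besicovitchDist_lt_of_mem_closure [BoundedSpace X] {δ β : ℝ} (hδ : 0 < δ)
    (hδβ : ∀ x y, dist x y < δ → besicovitchDist T x y < β) {p : X × X}
    (hp : p ∈ closure {q : X × X | besicovitchDist T q.1 q.2 ≤ β}) :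
    besicovitchDist T p.1 p.2 < 3 * β := by
  obtain ⟨q, hq, hpq⟩ := Metric.mem_closure_iff.1 hp δ hδ
  rw [Prod.dist_eq, max_lt_iff, dist_comm p.2] at hpq
  calc besicovitchDist T p.1 p.2
      ≤ besicovitchDist T p.1 q.1 + (besicovitchDist T q.1 q.2 + besicovitchDist T q.2 p.2) :=
        (besicovitchDist_triangle T _ _ _).trans
          (add_le_add_right (besicovitchDist_triangle T _ _ _) _)
    _ < β + (β + β) :=
        add_lt_add (hδβ _ _ hpq.1) (add_lt_add_of_le_of_lt hq (hδβ _ _ hpq.2))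
    _ = 3 * β := by ring

variable [CompactSpace X]

theorem MeanEquicontinuous.exists_avgDist_le (h : MeanEquicontinuous T) (hT : Continuous T)
    {β : ℝ} (hβ : 0 < β) : ∃ δ > 0, ∃ N : ℕ, ∀ x y, dist x y < δ → ∀ n : ℕ,
      avgDist T x y n ≤ 3 * β + N * Metric.diam (univ : Set X) / n := by
  obtain ⟨δ, hδ, hδβ⟩ := h β hβ
  set W := closure {q : X × X | besicovitchDist T q.1 q.2 ≤ β}
  have hWφ : MapsTo (Prod.map T T) W W :=
    MapsTo.closure (fun q hq => (besicovitchDist_map_le T q.1 q.2).trans hq) (hT.prodMap hT)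
  have hW (p) (hp : p ∈ W) : ∃ k, 0 < k ∧ avgDist T p.1 p.2 k < 3 * β :=
    ((eventually_avgDist_lt T (besicovitchDist_lt_of_mem_closure hδ hδβ hp)).and
      (eventually_gt_atTop 0)).exists.imp fun _ hk => ⟨hk.2, hk.1⟩
  obtain ⟨N, hN⟩ := isClosed_closure.isCompact.exists_forall_exists_le_lt
    (continuous_avgDist T hT) hW
  have hstop (p) (hp : p ∈ W) : ∃ k, 0 < k ∧ k ≤ N ∧
      birkhoffSum (Prod.map T T) (fun p => dist p.1 p.2) k p ≤ k * (3 * β) := by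
    obtain ⟨k, hk, hkN, hkβ⟩ := hN p hp
    refine ⟨k, hk, hkN, ?_⟩
    rw [birkhoffSum_eq_mul_avgDist]
    gcongr
  refine ⟨δ, hδ, N, fun x y hxy n => ?_⟩
  have hsum := birkhoffSum_le_mul_add_of_mapsTo hWφ (by positivity) Metric.diam_nonneg
    (fun p => dist_le_diam_univ p.1 p.2) hstop n (x, y) (subset_closure (hδβ x y hxy).le)
  rcases eq_or_ne n 0 with rfl | hn
  · simp only [avgDist, CharP.cast_eq_zero, inv_zero, zero_mul, div_zero, add_zero]
    positivity
  · rw [birkhoffSum_eq_mul_avgDist] at hsum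
    rw [← sub_le_iff_le_add', le_div_iff₀ (by positivity)]
    linarith

theorem MeanEquicontinuous.exists_forall_avgDist_lt (h : MeanEquicontinuous T)
    (hT : Continuous T) {ε : ℝ} (hε : 0 < ε) :
    ∃ δ > 0, ∀ x y, dist x y < δ → ∀ n, avgDist T x y n < ε := by
  obtain ⟨δ₁, hδ₁, N, hN⟩ := h.exists_avgDist_le hT (β := ε / 6) (by positivity)
  obtain ⟨n₀, hn₀⟩ := eventually_atTop.1 <|
    (tendsto_const_div_atTop_nhds_zero_nat (N * Metric.diam (univ : Set X))).eventually
      (gt_mem_nhds (half_pos hε))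
  obtain ⟨δ₂, hδ₂, hiter⟩ := Metric.uniformEquicontinuous_iff.1
    (uniformEquicontinuous_finite.2 fun i : Fin n₀ =>
      CompactSpace.uniformContinuous_of_continuous (hT.iterate i)) (ε / 2) (half_pos hε)
  refine ⟨min δ₁ δ₂, lt_min hδ₁ hδ₂, fun x y hxy n => ?_⟩
  rcases lt_or_ge n n₀ with hn | hn
  · refine (avgDist_le_of_forall_dist_le T (half_pos hε).le fun i hi => ?_).trans_lt
      (half_lt_self hε)
    exact (hiter x y (hxy.trans_le (min_le_right _ _)) ⟨i, hi.trans hn⟩).le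
  · calc avgDist T x y n ≤ 3 * (ε / 6) + N * Metric.diam (univ : Set X) / n :=
          hN x y (hxy.trans_le (min_le_left _ _)) n
      _ < ε := by linarith [hn₀ n hn]

end MeanEquicontinuous

theorem ContinuousMap.exists_abs_sub_le_add_mul_dist {X : Type*} [MetricSpace X] [CompactSpace X]
    (f : C(X, ℝ)) {η : ℝ} (hη : 0 < η) : ∃ K > 0, ∀ a b, |f a - f b| ≤ η + K * dist a b := by
  obtain ⟨δ, hδ, hfδ⟩ := Metric.uniformContinuous_iff.1
    (CompactSpace.uniformContinuous_of_continuous f.continuous) η hη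
  refine ⟨(2 * ‖f‖ + 1) / δ, by positivity, fun a b => ?_⟩
  rcases lt_or_ge (dist a b) δ with hab | hab
  · have hK : 0 ≤ (2 * ‖f‖ + 1) / δ * dist a b := by positivity
    have := hfδ hab
    rw [Real.dist_eq] at this
    linarith
  · calc |f a - f b| ≤ ‖f‖ + ‖f‖ :=
          (abs_sub _ _).trans (add_le_add (f.norm_coe_le_norm a) (f.norm_coe_le_norm b))
      _ ≤ (2 * ‖f‖ + 1) / δ * δ := by rw [div_mul_cancel₀ _ hδ.ne']; linarith
      _ ≤ η + (2 * ‖f‖ + 1) / δ * dist a b := le_add_of_nonneg_of_le hη.le (by gcongr)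

theorem abs_birkhoffAverage_sub_le {X : Type*} [MetricSpace X] (T : X → X) {f : X → ℝ}
    {η K : ℝ} (hη : 0 ≤ η) (hf : ∀ a b, |f a - f b| ≤ η + K * dist a b) (x y : X) (n : ℕ) :
    |birkhoffAverage ℝ T f n x - birkhoffAverage ℝ T f n y| ≤ η + K * avgDist T x y n :=
  calc |birkhoffAverage ℝ T f n x - birkhoffAverage ℝ T f n y|
      ≤ (∑ i ∈ Finset.range n, dist (f (T^[i] x)) (f (T^[i] y))) / n :=
        dist_birkhoffAverage_birkhoffAverage_le ℝ T f n x y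
    _ ≤ (∑ i ∈ Finset.range n, (η + K * dist (T^[i] x) (T^[i] y))) / n := by
        gcongr with i
        exact hf _ _
    _ = n / n * η + K * avgDist T x y n := by
        rw [Finset.sum_add_distrib, ← Finset.mul_sum, Finset.sum_const, Finset.card_range,
          avgDist, nsmul_eq_mul]
        ring
    _ ≤ η + K * avgDist T x y n := by
        gcongr
        exact mul_le_of_le_one_left hη (div_self_le_one _)

theorem birkhoff_averages_uniformly_equicontinuous
    {X : Type*} [MetricSpace X] [CompactSpace X] (T : X → X) (hT : Continuous T)
    (h : MeanEquicontinuous T) (f : C(X, ℝ)) :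
    ∀ ε > 0, ∃ δ > 0, ∀ x y : X, dist x y < δ → ∀ n : ℕ,
      |(n : ℝ)⁻¹ * ∑ i ∈ Finset.range n, f (T^[i] x) -
        (n : ℝ)⁻¹ * ∑ i ∈ Finset.range n, f (T^[i] y)| < ε := by
  intro ε hε
  obtain ⟨K, hK, hf⟩ := f.exists_abs_sub_le_add_mul_dist (half_pos hε)
  obtain ⟨δ, hδ, hδK⟩ := h.exists_forall_avgDist_lt hT (div_pos (half_pos hε) hK)
  refine ⟨δ, hδ, fun x y hxy n => ?_⟩
  calc _ ≤ ε / 2 + K * avgDist T x y n := abs_birkhoffAverage_sub_le T (half_pos hε).le hf x y n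
    _ < ε / 2 + K * (ε / 2 / K) := by gcongr; exact hδK x y hxy n
    _ = ε := by field_simp; ring
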